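/- arXiv:2303.15997 — 6 statements merged into one kernel-verified Lean document; each statement's English description precedes it below -/
import Mathlib

section
/- Let x and y be nonempty reduced words in a free group (viewed as words over an alphabet) that do not commute. If c is a common prefix of the powers x^n and y^n (for n large enough that both have length at least |x|+|y|), then |c| < |x| + |y| - gcd(|x|, |y|). -/
/-- `n`-fold concatenation of a word with itself. -/
def wpow {α : Type*} (w : List α) (n : ℕ) : List α := (List.replicate n w).flatten

theorem wpow_length {α : Type*} (w : List α) (n : ℕ) :
    (wpow w n).length = n * w.length := by
  simp [wpow, List.length_flatten]

theorem wpow_getElem? {α : Type*} (x : List α) (n i : ℕ) (hi : i < n * x.length) :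
    (wpow x n)[i]? = x[i % x.length]? := by
  induction n generalizing i with
  | zero => rw [Nat.zero_mul] at hi; omega
  | succ n ih =>
    have hx : 0 < x.length := by
      rcases Nat.eq_zero_or_pos x.length with h | h
      · rw [h, Nat.mul_zero] at hi; omega
      · exact h
    have hw : wpow x (n+1) = x ++ wpow x n := by
      simp [wpow, List.replicate_succ]
    rw [Nat.succ_mul] at hi
    rw [hw]
    by_cases h : i < x.length
    · rw [List.getElem?_append_left h, Nat.mod_eq_of_lt h]
    · rw [List.getElem?_append_right (by omega)]
      rw [ih _ (by omega)]
      congr 1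
      conv_rhs => rw [show i = (i - x.length) + x.length by omega]
      rw [Nat.add_mod_right]

/-- Fine–Wilf: if `f` has periods `p` and `q` on `[0, L)` with
`L ≥ p + q - gcd p q`, then values at indices congruent mod `gcd p q` agree. -/
theorem fine_wilf {β : Type*} :
    ∀ (N p q L : ℕ) (f : ℕ → β), p + q ≤ N → 0 < p → 0 < q →
    p + q - Nat.gcd p q ≤ L →
    (∀ i, i + p < L → f i = f (i + p)) →
    (∀ i, i + q < L → f i = f (i + q)) →
    ∀ i j, i < L → j < L → i % Nat.gcd p q = j % Nat.gcd p q → f i = f j := by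
  intro N
  induction N with
  | zero => intro p q L f hN hp hq; omega
  | succ N IH =>
    intro p q L f hN hp hq hL Hp Hq i j hi hj hij
    rcases lt_trichotomy p q with hpq | hpq | hpq
    · -- p < q : reduce q to q - p
      have hg : Nat.gcd p (q - p) = Nat.gcd p q := Nat.gcd_sub_self_right (le_of_lt hpq)
      have hgp : Nat.gcd p q ∣ p := Nat.gcd_dvd_left p q
      have hgq : Nat.gcd p q ∣ q := Nat.gcd_dvd_right p q
      have hqg : p + Nat.gcd p q ≤ q := by
        have : Nat.gcd p q ∣ q - p := (Nat.dvd_sub hgq hgp)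
        have h2 : Nat.gcd p q ≤ q - p := Nat.le_of_dvd (by omega) this
        omega
      have hgle : Nat.gcd p q ≤ p := Nat.le_of_dvd hp hgp
      have hLp : p ≤ L := by omega
      have key : ∀ i j, i < L - p → j < L - p →
          i % Nat.gcd p q = j % Nat.gcd p q → f i = f j := by
        intro a b ha hb hab
        have := IH p (q - p) (L - p) f (by omega) hp (by omega)
          (by rw [hg]; omega)
          (fun k hk => Hp k (by omega))
          (fun k hk => by
            have e1 : f k = f (k + q) := Hq k (by omega)
            have e2 : f (k + (q - p)) = f (k + (q - p) + p) := Hp _ (by omega)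
            rw [e1, e2]; congr 1; omega)
        exact this a b ha hb (by rw [hg]; exact hab)
      -- extension step: push indices below L - p using period p
      have red : ∀ k, k < L → ∃ k', k' < L - p ∧ k' % Nat.gcd p q = k % Nat.gcd p q ∧ f k = f k' := by
        intro k hk
        by_cases h : k < L - p
        · exact ⟨k, h, rfl, rfl⟩
        · refine ⟨k - p, by omega, ?_, ?_⟩
          · exact (Nat.modEq_iff_dvd' (Nat.sub_le k p)).mpr
              (by rw [show k - (k - p) = p by omega]; exact hgp)
          · have := Hp (k - p) (by omega)
            rw [show k - p + p = k by omega] at this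
            exact this.symm
      obtain ⟨i', hi1, hi2, hi3⟩ := red i hi
      obtain ⟨j', hj1, hj2, hj3⟩ := red j hj
      rw [hi3, hj3]
      exact key i' j' hi1 hj1 (by omega)
    · -- p = q
      subst hpq
      rw [Nat.gcd_self] at hij
      have red : ∀ k, k < L → f k = f (k % p) := by
        intro k
        induction k using Nat.strong_induction_on with
        | _ k ihk =>
          intro hk
          by_cases h : k < p
          · rw [Nat.mod_eq_of_lt h]
          · have e : f (k - p) = f k := by
              have := Hp (k - p) (by omega)
              rwa [show k - p + p = k by omega] at this
            rw [← e, ihk (k - p) (by omega) (by omega)]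
            congr 1
            conv_rhs => rw [show k = (k - p) + p by omega]
            rw [Nat.add_mod_right]
      rw [red i hi, red j hj, hij]
    · -- q < p : reduce p to p - q
      have hg : Nat.gcd (p - q) q = Nat.gcd p q := Nat.gcd_sub_self_left (le_of_lt hpq)
      have hgp : Nat.gcd p q ∣ p := Nat.gcd_dvd_left p q
      have hgq : Nat.gcd p q ∣ q := Nat.gcd_dvd_right p q
      have hqg : q + Nat.gcd p q ≤ p := by
        have : Nat.gcd p q ∣ p - q := (Nat.dvd_sub hgp hgq)
        have h2 : Nat.gcd p q ≤ p - q := Nat.le_of_dvd (by omega) this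
        omega
      have hgle : Nat.gcd p q ≤ q := Nat.le_of_dvd hq hgq
      have hLq : q ≤ L := by omega
      have key : ∀ i j, i < L - q → j < L - q →
          i % Nat.gcd p q = j % Nat.gcd p q → f i = f j := by
        intro a b ha hb hab
        have := IH (p - q) q (L - q) f (by omega) (by omega) hq
          (by rw [hg]; omega)
          (fun k hk => by
            have e1 : f k = f (k + p) := Hp k (by omega)
            have e2 : f (k + (p - q)) = f (k + (p - q) + q) := Hq _ (by omega)
            rw [e1, e2]; congr 1; omega)
          (fun k hk => Hq k (by omega))
        exact this a b ha hb (by rw [hg]; exact hab)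
      have red : ∀ k, k < L → ∃ k', k' < L - q ∧ k' % Nat.gcd p q = k % Nat.gcd p q ∧ f k = f k' := by
        intro k hk
        by_cases h : k < L - q
        · exact ⟨k, h, rfl, rfl⟩
        · refine ⟨k - q, by omega, ?_, ?_⟩
          · exact (Nat.modEq_iff_dvd' (Nat.sub_le k q)).mpr
              (by rw [show k - (k - q) = q by omega]; exact hgq)
          · have := Hq (k - q) (by omega)
            rw [show k - q + q = k by omega] at this
            exact this.symm
      obtain ⟨i', hi1, hi2, hi3⟩ := red i hi
      obtain ⟨j', hj1, hj2, hj3⟩ := red j hj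
      rw [hi3, hj3]
      exact key i' j' hi1 hj1 (by omega)

/-- Fine–Wilf-type periodicity lemma: a common prefix of powers of two
non-commuting nonempty words `x`, `y` has length `< |x| + |y| - gcd(|x|,|y|)`. -/
theorem common_prefix_of_powers_lt {α : Type*} (x y c : List α) (n : ℕ)
    (hx : x ≠ []) (hy : y ≠ []) (hcomm : x ++ y ≠ y ++ x)
    (hnx : x.length + y.length ≤ (wpow x n).length)
    (hny : x.length + y.length ≤ (wpow y n).length)
    (hcx : c <+: wpow x n) (hcy : c <+: wpow y n) :
    c.length < x.length + y.length - Nat.gcd x.length y.length := by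
  by_contra hcon
  set p := x.length with hp'
  set q := y.length with hq'
  set g := Nat.gcd p q with hg'
  set L := c.length with hL'
  clear_value p q g L
  have hp : 0 < p := hp' ▸ List.length_pos_iff.mpr hx
  have hq : 0 < q := hq' ▸ List.length_pos_iff.mpr hy
  have hgp : g ∣ p := hg' ▸ Nat.gcd_dvd_left p q
  have hgq : g ∣ q := hg' ▸ Nat.gcd_dvd_right p q
  have hgle : g ≤ p := Nat.le_of_dvd hp hgp
  have hgleq : g ≤ q := Nat.le_of_dvd hq hgq
  have hg0 : 0 < g := Nat.pos_of_dvd_of_pos hgp hp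
  have hLge : p + q - g ≤ L := by omega
  rw [wpow_length] at hnx hny
  -- prefix values
  have hxval : ∀ i : ℕ, i < L → (c)[i]? = x[i % p]? := by
    intro i hi
    obtain ⟨t, ht⟩ := hcx
    have h1 : (wpow x n)[i]? = (c)[i]? := by
      rw [← ht, List.getElem?_append_left (by omega)]
    rw [← h1, hp', wpow_getElem? x n i (by
      have hle : L ≤ (wpow x n).length := by rw [← ht]; simp [hL']
      rw [wpow_length] at hle; omega)]
  have hyval : ∀ i : ℕ, i < L → (c)[i]? = y[i % q]? := by
    intro i hi
    obtain ⟨t, ht⟩ := hcy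
    have h1 : (wpow y n)[i]? = (c)[i]? := by
      rw [← ht, List.getElem?_append_left (by omega)]
    rw [← h1, hq', wpow_getElem? y n i (by
      have hle : L ≤ (wpow y n).length := by rw [← ht]; simp [hL']
      rw [wpow_length] at hle; omega)]
  -- c has periods p and q
  have Hp : ∀ i, i + p < L → (c)[i]? = (c)[i + p]? := by
    intro i hi
    rw [hxval i (by omega), hxval (i + p) hi, Nat.add_mod_right]
  have Hq : ∀ i, i + q < L → (c)[i]? = (c)[i + q]? := by
    intro i hi
    rw [hyval i (by omega), hyval (i + q) hi, Nat.add_mod_right]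
  have FW : ∀ i j : ℕ, i < L → j < L → i % g = j % g → (c)[i]? = (c)[j]? := by
    rw [hg']
    exact fine_wilf (p + q) p q L (fun i => (c)[i]?) le_rfl hp hq
      (by rw [← hg']; exact hLge) Hp Hq
  -- any index in range reduces to its residue mod g
  have hmod : ∀ i : ℕ, i < L → (c)[i]? = (c)[i % g]? := by
    intro i hi
    exact FW i (i % g) hi
      (by have : i % g < g := Nat.mod_lt _ (by omega); omega)
      (Nat.mod_mod_of_dvd i dvd_rfl).symm
  -- conclude x ++ y = y ++ x
  apply hcomm
  apply List.ext_getElem?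
  intro i
  by_cases hiL : i < p + q
  · have e1 : (x ++ y)[i]? = (c)[i % g]? := by
      by_cases h : i < p
      · rw [List.getElem?_append_left (by omega)]
        calc x[i]? = (c)[i]? := by rw [hxval i (by omega), Nat.mod_eq_of_lt h]
          _ = (c)[i % g]? := hmod i (by omega)
      · rw [List.getElem?_append_right (by rw [← hp']; omega), ← hp']
        have h2 : i - p < q := by omega
        calc y[i - p]? = (c)[i - p]? := by
              rw [hyval (i - p) (by omega), Nat.mod_eq_of_lt h2]
          _ = (c)[(i - p) % g]? := hmod (i - p) (by omega)
          _ = (c)[i % g]? := by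
              congr 1
              exact (Nat.modEq_iff_dvd' (Nat.sub_le i p)).mpr
                (by rw [show i - (i - p) = p by omega]; exact hgp)
    have e2 : (y ++ x)[i]? = (c)[i % g]? := by
      by_cases h : i < q
      · rw [List.getElem?_append_left (by omega)]
        calc y[i]? = (c)[i]? := by rw [hyval i (by omega), Nat.mod_eq_of_lt h]
          _ = (c)[i % g]? := hmod i (by omega)
      · rw [List.getElem?_append_right (by rw [← hq']; omega), ← hq']
        have h2 : i - q < p := by omega
        calc x[i - q]? = (c)[i - q]? := by
              rw [hxval (i - q) (by omega), Nat.mod_eq_of_lt h2]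
          _ = (c)[(i - q) % g]? := hmod (i - q) (by omega)
          _ = (c)[i % g]? := by
              congr 1
              exact (Nat.modEq_iff_dvd' (Nat.sub_le i q)).mpr
                (by rw [show i - (i - q) = q by omega]; exact hgq)
    rw [e1, e2]
  · rw [List.getElem?_eq_none (l := x ++ y) (by simp; omega),
      List.getElem?_eq_none (l := y ++ x) (by simp; omega)]
end

section
/- Let b ≠ 1 be a cyclically reduced word. If b = xy with |x| ≥ |b|/2, then no cyclic shift of b contains x⁻¹ as a subword. -/
/-- A word is reduced if no adjacent pair of letters cancels. -/
def Reduced {α : Type*} (w : List (α × Bool)) : Prop :=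
  List.Chain' (fun a b => ¬(b.1 = a.1 ∧ b.2 = !a.2)) w

/-- A word is cyclically reduced if every cyclic shift of it is reduced. -/
def CycReduced {α : Type*} (w : List (α × Bool)) : Prop :=
  ∀ u v : List (α × Bool), w = u ++ v → Reduced (v ++ u)

/-- Formal inverse of a word. -/
def wordInv {α : Type*} (w : List (α × Bool)) : List (α × Bool) :=
  (w.map fun p => (p.1, !p.2)).reverse

lemma wordInv_getElem? {α : Type*} (x : List (α × Bool)) (k : ℕ) (hk : k < x.length) :
    (wordInv x)[k]? = (x[x.length - 1 - k]?).map (fun p => (p.1, !p.2)) := by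
  unfold wordInv
  rw [List.getElem?_reverse (by simpa using hk), List.getElem?_map]
  simp

/-- If `b ≠ 1` is cyclically reduced and `b = x ++ y` with `|x| ≥ |b|/2`, then
no cyclic shift of `b` contains `x⁻¹` as a subword. -/
theorem no_cyclic_shift_contains_inverse {α : Type*} (b x y : List (α × Bool))
    (hb : b ≠ []) (hcyc : CycReduced b) (hxy : b = x ++ y)
    (hlen : b.length ≤ 2 * x.length) :
    ∀ u v : List (α × Bool), b = u ++ v → ¬ (wordInv x <:+: v ++ u) := by
  intro u v huv hinf
  obtain ⟨t, t', ht⟩ := hinf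
  set n := b.length with hn'
  set m := x.length with hm'
  have hmn : m ≤ n := by rw [hn', hxy]; simp [hm']
  have hn : 0 < n := List.length_pos_iff.mpr hb
  have hm : 0 < m := by omega
  -- the doubled word
  have hbb : b ++ b = (u ++ t) ++ (wordInv x ++ (t' ++ v)) := by
    rw [huv]
    calc (u ++ v) ++ (u ++ v) = u ++ ((v ++ u) ++ v) := by simp
    _ = u ++ ((t ++ wordInv x ++ t') ++ v) := by rw [ht]
    _ = (u ++ t) ++ (wordInv x ++ (t' ++ v)) := by simp
  have hwl : (wordInv x).length = m := by simp [wordInv, hm']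
  set S := u.length + t.length with hS'
  have hSl : (u ++ t).length = S := by simp [hS']
  have hS2 : S + m ≤ n + n := by
    have := congrArg List.length hbb
    simp only [List.length_append, hwl] at this
    omega
  -- the key relation: the occurrence of the inverse word inside b ++ b
  have K0 : ∀ k, k < m → (b ++ b)[S + k]? = (x[m - 1 - k]?).map (fun p => (p.1, !p.2)) := by
    intro k hk
    rw [hbb, List.getElem?_append_right (by omega : (u ++ t).length ≤ S + k), hSl,
      show S + k - S = k from by omega,
      List.getElem?_append_left (by omega : k < (wordInv x).length),
      wordInv_getElem? x k (by omega)]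
  -- indexing facts
  have Hx : ∀ j, j < m → b[j]? = x[j]? := by
    intro j hj
    rw [hxy, List.getElem?_append_left (by omega : j < x.length)]
  have H1 : ∀ i, i < n → (b ++ b)[i]? = b[i]? := by
    intro i hi
    rw [List.getElem?_append_left (by omega : i < b.length)]
  have H2 : ∀ i, i < n → (b ++ b)[n + i]? = b[i]? := by
    intro i hi
    rw [List.getElem?_append_right (by omega : b.length ≤ n + i),
      show n + i - b.length = i from by omega]
  -- normalize the start position to be < n
  obtain ⟨s, hs, K⟩ : ∃ s, s < n ∧ ∀ k, k < m →
      (b ++ b)[s + k]? = (x[m - 1 - k]?).map (fun p => (p.1, !p.2)) := by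
    by_cases hSn : S < n
    · exact ⟨S, hSn, K0⟩
    · refine ⟨S - n, by omega, fun k hk => ?_⟩
      have h1 := K0 k hk
      rw [List.getElem?_append_right (by omega : b.length ≤ S + k),
        show S + k - b.length = (S - n) + k from by omega] at h1
      rw [H1 ((S - n) + k) (by omega)]
      exact h1
  -- b is reduced
  have hredb : Reduced b := by
    have := hcyc [] b (by simp)
    simpa using this
  have hred : ∀ i a c, b[i]? = some a → b[i + 1]? = some c →
      ¬(c.1 = a.1 ∧ c.2 = !a.2) := by
    intro i a c ha hc
    obtain ⟨hic, hc'⟩ := List.getElem?_eq_some_iff.mp hc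
    obtain ⟨hia, ha'⟩ := List.getElem?_eq_some_iff.mp ha
    have := (List.isChain_iff_getElem.mp hredb) i (by omega)
    rw [ha', hc'] at this
    exact this
  -- letters exist
  have Hsome : ∀ j, j < m → ∃ a : α × Bool, x[j]? = some a := by
    intro j hj
    exact ⟨x[j]'(by omega), List.getElem?_eq_getElem (by omega)⟩
  by_cases hcase : s + m ≤ n
  · -- occurrence lies within the first copy of b
    have hsm : s ≤ m := by omega
    rcases Nat.even_or_odd (s + m - 1) with ⟨p, hp⟩ | ⟨p, hp⟩
    · -- even: fixed point
      have hk : p - s < m := by omega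
      have h1 := K (p - s) hk
      rw [show s + (p - s) = p from by omega,
        show m - 1 - (p - s) = p from by omega] at h1
      rw [H1 p (by omega), Hx p (by omega)] at h1
      obtain ⟨a, ha⟩ := Hsome p (by omega)
      rw [ha] at h1
      simp only [Option.map_some] at h1
      have := congrArg (fun o => (Option.map Prod.snd o)) h1
      simp at this
    · -- odd: adjacent cancelling pair inside b
      have hk : p + 1 - s < m := by omega
      have h1 := K (p + 1 - s) hk
      rw [show s + (p + 1 - s) = p + 1 from by omega,
        show m - 1 - (p + 1 - s) = p from by omega] at h1
      rw [H1 (p + 1) (by omega)] at h1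
      obtain ⟨a, ha⟩ := Hsome p (by omega)
      rw [ha] at h1
      simp only [Option.map_some] at h1
      have hbp : b[p]? = some a := by rw [Hx p (by omega)]; exact ha
      exact hred p a (a.1, !a.2) hbp h1 ⟨rfl, rfl⟩
  · -- occurrence wraps around: reflect inside x
    have hC : s + m - 1 - n < m := by omega
    set C := s + m - 1 - n with hC'
    have Rel : ∀ j, j ≤ C → x[j]? = (x[C - j]?).map (fun p => (p.1, !p.2)) := by
      intro j hj
      have hk : n - s + j < m := by omega
      have h1 := K (n - s + j) hk
      rw [show s + (n - s + j) = n + j from by omega,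
        show m - 1 - (n - s + j) = C - j from by omega] at h1
      rw [H2 j (by omega), Hx j (by omega)] at h1
      exact h1
    rcases Nat.even_or_odd C with ⟨p, hp⟩ | ⟨p, hp⟩
    · have h1 := Rel p (by omega)
      rw [show C - p = p from by omega] at h1
      obtain ⟨a, ha⟩ := Hsome p (by omega)
      rw [ha] at h1
      simp only [Option.map_some] at h1
      have := congrArg (fun o => (Option.map Prod.snd o)) h1
      simp at this
    · have h1 := Rel p (by omega)
      rw [show C - p = p + 1 from by omega] at h1
      obtain ⟨c, hc⟩ := Hsome (p + 1) (by omega)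
      rw [hc] at h1
      simp only [Option.map_some] at h1
      have hbp : b[p]? = some (c.1, !c.2) := by rw [Hx p (by omega)]; exact h1
      have hbp1 : b[p + 1]? = some c := by rw [Hx (p + 1) (by omega)]; exact hc
      exact hred p (c.1, !c.2) c hbp hbp1 ⟨rfl, by simp⟩
end

section
/- There exist infinitely many cube-free words over a two-letter alphabet, i.e., words containing no subword of the form v³ with v nonempty. -/
def tm (n : ℕ) : Bool :=
  if h : n = 0 then false
  else if n % 2 = 0 then tm (n / 2) else ! tm (n / 2)
decreasing_by all_goals exact Nat.div_lt_self (Nat.pos_of_ne_zero h) one_lt_two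

lemma tm_two_mul (n : ℕ) : tm (2 * n) = tm n := by
  rcases Nat.eq_zero_or_pos n with h | h
  · subst h; rfl
  · rw [tm]
    have h1 : 2 * n ≠ 0 := by omega
    have h2 : (2 * n) % 2 = 0 := by omega
    have h3 : (2 * n) / 2 = n := by omega
    simp [h1, h2, h3]

lemma tm_two_mul_add_one (n : ℕ) : tm (2 * n + 1) = ! tm n := by
  rw [tm]
  have h1 : 2 * n + 1 ≠ 0 := by omega
  have h2 : (2 * n + 1) % 2 ≠ 0 := by omega
  have h3 : (2 * n + 1) / 2 = n := by omega
  simp [h1, h2, h3]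

lemma tm_no_triple (k : ℕ) : ¬ (tm (k + 1) = tm k ∧ tm (k + 2) = tm (k + 1)) := by
  rcases Nat.even_or_odd k with ⟨a, ha⟩ | ⟨a, ha⟩
  · have e1 : k = 2 * a := by omega
    have e2 : k + 1 = 2 * a + 1 := by omega
    rw [e1] at *
    rintro ⟨h1, -⟩
    rw [e2, tm_two_mul_add_one, tm_two_mul] at h1
    cases tm a <;> simp_all
  · have e1 : k + 1 = 2 * (a + 1) := by omega
    have e2 : k + 2 = 2 * (a + 1) + 1 := by omega
    rintro ⟨-, h2⟩
    rw [e1, e2, tm_two_mul_add_one, tm_two_mul] at h2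
    cases tm (a + 1) <;> simp_all

/-- The Thue–Morse sequence contains no cube: no block of length `p ≥ 1`
repeats three times consecutively. -/
lemma tm_no_cube : ∀ p, 0 < p → ∀ i, ¬ (∀ j < 2 * p, tm (i + j + p) = tm (i + j)) := by
  intro p
  induction p using Nat.strong_induction_on with
  | _ p IH =>
    intro hp i H
    rcases Nat.even_or_odd p with ⟨q, hq⟩ | ⟨q, hq⟩
    · -- p = 2q even: halve
      have hq' : 0 < q := by omega
      have hp2 : p = 2 * q := by omega
      set m0 := (i + 1) / 2 with hm0
      have hb1 : i ≤ 2 * m0 := by omega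
      have hb2 : 2 * m0 ≤ i + 1 := by omega
      refine IH q (by omega) hq' m0 ?_
      intro j hj
      have h1 := H (2 * (m0 + j) - i) (by omega)
      have e1 : i + (2 * (m0 + j) - i) + p = 2 * (m0 + j + q) := by omega
      have e2 : i + (2 * (m0 + j) - i) = 2 * (m0 + j) := by omega
      rw [e1, e2, tm_two_mul, tm_two_mul] at h1
      exact h1
    · rcases Nat.eq_zero_or_pos q with hq0 | hq0
      · -- p = 1: contradicts tm_no_triple
        have hp1 : p = 1 := by omega
        subst hp1
        have h0 := H 0 (by omega)
        have h1 := H 1 (by omega)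
        simp only [Nat.add_zero] at h0
        exact tm_no_triple i ⟨h0, by simpa [Nat.add_assoc] using h1⟩
      · -- p = 2q+1 odd, q ≥ 1
        have hp2 : p = 2 * q + 1 := by omega
        set m0 := (i + 1) / 2 with hm0
        have hb1 : i ≤ 2 * m0 := by omega
        have hb2 : 2 * m0 ≤ i + 1 := by omega
        -- for m = m0 and m = m0+1: tm (m+q) = !tm m and tm (m+q+1) = !tm m
        have key : ∀ m, i ≤ 2 * m → 2 * m + 1 < i + 2 * p →
            tm (m + q) = ! tm m ∧ tm (m + q + 1) = ! tm m := by
          intro m hm1 hm2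
          have hA := H (2 * m - i) (by omega)
          have eA1 : i + (2 * m - i) + p = 2 * (m + q) + 1 := by omega
          have eA2 : i + (2 * m - i) = 2 * m := by omega
          rw [eA1, eA2, tm_two_mul_add_one, tm_two_mul] at hA
          have hB := H (2 * m + 1 - i) (by omega)
          have eB1 : i + (2 * m + 1 - i) + p = 2 * (m + q + 1) := by omega
          have eB2 : i + (2 * m + 1 - i) = 2 * m + 1 := by omega
          rw [eB1, eB2, tm_two_mul, tm_two_mul_add_one] at hB
          constructor
          · cases hm : tm m <;> cases hmq : tm (m + q) <;> simp_all
          · exact hB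
        have k1 := key m0 (by omega) (by omega)
        have k2 := key (m0 + 1) (by omega) (by omega)
        refine tm_no_triple (m0 + q) ⟨?_, ?_⟩
        · rw [show m0 + q + 1 = m0 + q + 1 from rfl, k1.2, k1.1]
        · have e : m0 + q + 2 = (m0 + 1) + q + 1 := by omega
          have e' : m0 + q + 1 = (m0 + 1) + q := by omega
          rw [e, e', k2.2, k2.1]


/-- A word is cube-free if it contains no factor `v ++ v ++ v` with `v` nonempty. -/
def CubeFree {α : Type*} (w : List α) : Prop :=
  ∀ v : List α, v ≠ [] → ¬ (v ++ v ++ v <:+: w)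


lemma cubeFree_ofFn_tm (N : ℕ) : CubeFree (List.ofFn (fun k : Fin N => tm k)) := by
  intro v hv hinf
  obtain ⟨s, t, hst⟩ := hinf
  set p := v.length with hp
  have hppos : 0 < p := List.length_pos_iff.mpr hv
  have hL := congrArg List.length hst
  simp only [List.length_append, List.length_ofFn] at hL
  -- hL : s.length + (p + p + p) + t.length = N  (up to assoc)
  have hval : ∀ j < 3 * p, (v ++ v ++ v)[j]? = some (tm (s.length + j)) := by
    intro j hj
    have hjN : s.length + j < N := by omega
    have := congrArg (fun l => l[s.length + j]?) hst
    rw [List.getElem?_ofFn] at this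
    rw [List.append_assoc] at this
    rw [List.getElem?_append_right (by omega : s.length ≤ s.length + j)] at this
    rw [List.getElem?_append_left (by simp only [List.length_append]; omega)] at this
    simp only [Nat.add_sub_cancel_left] at this
    rw [this]
    simp [List.ofFnNthVal, hjN]
  have hper : ∀ j < 2 * p, (v ++ v ++ v)[j + p]? = (v ++ v ++ v)[j]? := by
    intro j hj
    have h1 : (v ++ v ++ v)[j]? = (v ++ v)[j]? := by
      rw [List.getElem?_append_left (by simp only [List.length_append]; omega)]
    have h2 : ((v ++ (v ++ v)))[j + p]? = (v ++ v)[j]? := by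
      rw [List.getElem?_append_right (by omega : v.length ≤ j + p)]
      congr 1
      omega
    rw [h1, ← h2, List.append_assoc]
  exact tm_no_cube p hppos s.length (fun j hj => by
    have := hper j hj
    rw [hval (j + p) (by omega), hval j (by omega)] at this
    simpa [Nat.add_assoc] using Option.some.inj this)

/-- There are infinitely many cube-free words over a two-letter alphabet. -/
theorem infinitely_many_cube_free_words : {w : List Bool | CubeFree w}.Infinite := by
  refine Set.infinite_of_injective_forall_mem
    (f := fun N : ℕ => List.ofFn (fun k : Fin N => tm k)) ?_ ?_
  · intro a b h
    simpa using congrArg List.length h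
  · intro N
    exact cubeFree_ofFn_tm N
end

section
/- There exists an infinite sequence m : ℕ → {1, 2} that is overlap-free in the strong sense: it contains no factor of the form BBb, where B is a nonempty finite block and b is a nonempty prefix of B. -/
/-- The Thue–Morse sequence as a `Bool`-valued function: parity of the number
of `1` bits in the binary expansion. -/
def tmAux (n : ℕ) : Bool := (n.bits.count true) % 2 == 1

lemma tmAux_even (m : ℕ) : tmAux (2*m) = tmAux m := by
  unfold tmAux
  rcases Nat.eq_zero_or_pos m with h | h
  · simp [h]
  · rw [show 2*m = Nat.bit false m from by simp [Nat.bit],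
      Nat.bits_append_bit _ _ (by omega)]
    simp

lemma tmAux_odd (m : ℕ) : tmAux (2*m+1) = !tmAux m := by
  unfold tmAux
  rw [show 2*m+1 = Nat.bit true m from by simp [Nat.bit],
    Nat.bits_append_bit _ _ (by simp)]
  simp [Nat.add_mod]
  rcases Nat.mod_two_eq_zero_or_one (List.count true m.bits) with h | h <;> simp [h]

lemma tmAux_no_three (q : ℕ) (h1 : tmAux q = tmAux (q+1))
    (h2 : tmAux (q+1) = tmAux (q+2)) : False := by
  rcases Nat.even_or_odd q with ⟨r, hr⟩ | ⟨r, hr⟩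
  · have e1 : tmAux q = tmAux r := by rw [show q = 2*r by omega, tmAux_even]
    have e2 : tmAux (q+1) = !tmAux r := by rw [show q+1 = 2*r+1 by omega, tmAux_odd]
    rw [e1, e2] at h1
    cases tmAux r <;> simp_all
  · have e1 : tmAux (q+1) = tmAux (r+1) := by rw [show q+1 = 2*(r+1) by omega, tmAux_even]
    have e2 : tmAux (q+2) = !tmAux (r+1) := by rw [show q+2 = 2*(r+1)+1 by omega, tmAux_odd]
    rw [e1, e2] at h2
    cases tmAux (r+1) <;> simp_all

lemma tmAux_no_three' (q r s : ℕ) (hr : r = q+1) (hs : s = q+2)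
    (h1 : tmAux q = tmAux r) (h2 : tmAux r = tmAux s) : False := by
  subst hr; subst hs; exact tmAux_no_three q h1 h2

lemma tmAux_step (c k m : ℕ) (h : ∀ j ≤ 2*c+1, tmAux (k+j) = tmAux (k+(2*c+1)+j))
    (hk : k ≤ 2*m) (hb : 2*m+1 ≤ k+(2*c+1)) : tmAux (m+c) = tmAux (m+c+1) := by
  have e1 := h (2*m - k) (by omega)
  have e2 := h (2*m + 1 - k) (by omega)
  rw [show k+(2*c+1)+(2*m-k) = 2*(m+c)+1 by omega, show k + (2*m-k) = 2*m by omega,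
    tmAux_even, tmAux_odd] at e1
  rw [show k+(2*c+1)+(2*m+1-k) = 2*(m+c+1) by omega, show k + (2*m+1-k) = 2*m+1 by omega,
    tmAux_odd, tmAux_even] at e2
  cases hm : tmAux m <;> rw [hm] at e1 e2 <;> simp_all

/-- The Thue–Morse sequence is overlap-free. -/
lemma tmAux_overlap_free : ∀ n, 1 ≤ n → ∀ k, ¬ (∀ j ≤ n, tmAux (k+j) = tmAux (k+n+j)) := by
  intro n
  induction n using Nat.strong_induction_on with
  | _ n IH =>
  intro hn k h
  rcases Nat.even_or_odd n with ⟨m, hm⟩ | ⟨c, hc⟩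
  · -- n = 2m
    have hm1 : 1 ≤ m := by omega
    rcases Nat.even_or_odd k with ⟨a, ha⟩ | ⟨a, ha⟩
    · refine IH m (by omega) hm1 a (fun j' hj' => ?_)
      have e := h (2*j') (by omega)
      rwa [show k+n+2*j' = 2*(a+m+j') by omega, show k+2*j' = 2*(a+j') by omega,
        tmAux_even, tmAux_even] at e
    · refine IH m (by omega) hm1 a (fun j' hj' => ?_)
      have e := h (2*j') (by omega)
      rw [show k+n+2*j' = 2*(a+m+j')+1 by omega, show k+2*j' = 2*(a+j')+1 by omega,
        tmAux_odd, tmAux_odd] at e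
      cases hx : tmAux (a+j') <;> rw [hx] at e <;> simp_all
  · -- n = 2c+1
    rcases Nat.eq_zero_or_pos c with hc0 | hc1
    · -- n = 1
      have e0 := h 0 (by omega)
      have e1 := h 1 (by omega)
      rw [show k+n+0 = k+1 by omega, show k+0 = k by omega] at e0
      rw [show k+n+1 = k+2 by omega] at e1
      exact tmAux_no_three k e0 e1
    · have h' : ∀ j ≤ 2*c+1, tmAux (k+j) = tmAux (k+(2*c+1)+j) := by
        intro j hj; have := h j (by omega); rwa [show k+n+j = k+(2*c+1)+j by omega] at this
      rcases Nat.even_or_odd k with ⟨a, ha⟩ | ⟨a, ha⟩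
      · -- k even
        have s1 := tmAux_step c k a h' (by omega) (by omega)
        have s2 := tmAux_step c k (a+1) h' (by omega) (by omega)
        rw [show a+1+c = a+c+1 by omega] at s2
        exact tmAux_no_three' (a+c) _ _ rfl (by omega) s1 s2
      · rcases Nat.lt_or_ge c 2 with hc2 | hc2
        · -- c = 1, k = 2a+1 : the n = 3 special case
          have e0 := h' 0 (by omega)
          have e1 := h' 1 (by omega)
          have e2 := h' 2 (by omega)
          have e3 := h' 3 (by omega)
          rw [show k+(2*c+1)+0 = 2*(a+2) by omega, show k+0 = 2*a+1 by omega,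
            tmAux_odd, tmAux_even] at e0
          rw [show k+(2*c+1)+1 = 2*(a+2)+1 by omega, show k+1 = 2*(a+1) by omega,
            tmAux_even, tmAux_odd] at e1
          rw [show k+(2*c+1)+2 = 2*(a+3) by omega, show k+2 = 2*(a+1)+1 by omega,
            tmAux_odd, tmAux_even] at e2
          rw [show k+(2*c+1)+3 = 2*(a+3)+1 by omega, show k+3 = 2*(a+2) by omega,
            tmAux_even, tmAux_odd] at e3
          cases tmAux a <;> cases tmAux (a+1) <;> cases tmAux (a+2) <;>
            cases tmAux (a+3) <;> simp_all
        · -- k odd, c ≥ 2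
          have s1 := tmAux_step c k (a+1) h' (by omega) (by omega)
          have s2 := tmAux_step c k (a+2) h' (by omega) (by omega)
          rw [show a+2+c = a+1+c+1 by omega] at s2
          exact tmAux_no_three' (a+1+c) _ _ rfl (by omega) s1 s2

lemma ov_key (B b : List ℕ) (hB : 0 < B.length) (hb : 0 < b.length) (hpre : b <+: B)
    (j : ℕ) (hj : j ≤ B.length)
    (h1 : j < (B++B++b).length) (h2 : B.length + j < (B++B++b).length) :
    (B++B++b)[j]'h1 = (B++B++b)[B.length+j]'h2 := by
  rcases Nat.lt_or_ge j B.length with hjn | hjn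
  · have eL : (B++B++b)[j]'h1 = B[j] := by
      rw [List.getElem_append_left (as := B++B) (by simp; omega),
        List.getElem_append_left hjn]
    have eR : (B++B++b)[B.length+j]'h2 = B[j] := by
      rw [List.getElem_append_left (as := B++B) (by simp; omega),
        List.getElem_append_right (by omega)]
      congr 1
      omega
    rw [eL, eR]
  · have hj' : j = B.length := by omega
    subst hj'
    have eL : (B++B++b)[B.length]'h1 = B[0] := by
      rw [List.getElem_append_left (as := B++B) (by simp; omega),
        List.getElem_append_right (le_refl _)]
      congr 1
      omega
    have eR : (B++B++b)[B.length+B.length]'h2 = b[0] := by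
      rw [List.getElem_append_right (by simp)]
      congr 1
      simp
    rw [eL, eR]
    exact (hpre.getElem (by omega)).symm

def tmSeq (i : ℕ) : ℕ := if tmAux i then 2 else 1

/-- There exists an infinite sequence over `{1, 2}` containing no factor of the
form `B ++ B ++ b` where `B` is a nonempty block and `b` a nonempty prefix of `B`. -/
theorem exists_overlap_free_sequence :
    ∃ m : ℕ → ℕ, (∀ i, m i = 1 ∨ m i = 2) ∧
      ∀ (i : ℕ) (B b : List ℕ), B ≠ [] → b ≠ [] → b <+: B →
        ¬ ∀ (j : ℕ) (hj : j < (B ++ B ++ b).length),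
            (B ++ B ++ b).get ⟨j, hj⟩ = m (i + j) := by
  refine ⟨tmSeq, fun i => by unfold tmSeq; cases h : tmAux i <;> simp [h], ?_⟩
  intro i B b hB hb hpre hall
  have hB1 : 0 < B.length := List.length_pos_iff.mpr hB
  have hb1 : 0 < b.length := List.length_pos_iff.mpr hb
  have hlen : (B++B++b).length = B.length + B.length + b.length := by simp; omega
  refine tmAux_overlap_free B.length hB1 i (fun j hj => ?_)
  have g1 := hall j (by omega)
  have g2 := hall (B.length + j) (by omega)
  rw [List.get_eq_getElem] at g1 g2
  rw [show i + (B.length + j) = i + B.length + j by omega] at g2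
  have e := ov_key B b hB1 hb1 hpre j hj (by omega) (by omega)
  have e' : tmSeq (i+j) = tmSeq (i+B.length+j) := (g1.symm.trans e).trans g2
  unfold tmSeq at e'
  cases h1 : tmAux (i+j) <;> cases h2 : tmAux (i+B.length+j) <;>
    rw [h1, h2] at e' <;> first | rfl | simp at e'
end

section
/- Let a^n = u₀ d v₀⁻¹ c be a cyclically reduced word written as a cyclic concatenation of four segments, where c and d each have length at most 1, u₀ and v₀ are nonempty, n is odd, a is not a single letter, and the centralizer of a^n is ⟨a⟩. Then the two six-element multisets of words {u₀, u₀⁻¹, cu₀, u₀d, u₀⁻¹c⁻¹, d⁻¹u₀⁻¹} and {v₀, v₀⁻¹, c⁻¹v₀, v₀d⁻¹, v₀⁻¹c, dv₀⁻¹} are distinct. -/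
/-!
Comparing total lengths gives `|u₀| = |v₀|`, and the only elements of the second multiset of
that length are `v₀` and `v₀⁻¹`, so `u₀ = v₀` or `u₀ = v₀⁻¹`.

If `u₀ = v₀`, then `a^n = u₀ d u₀⁻¹ c`: for `d` empty this word cancels, for `c` empty its
cyclic shift `u₀⁻¹ u₀ d` does, and for single letters `c, d` the membership of `c u₀` in the
second multiset forces a cancellation or `u₀ = u₀⁻¹`.

If `u₀ = v₀⁻¹`, then `a^n = u₀ d u₀ c`, and matching `c u₀` and `u₀ d` against the second
multiset by first and last letters shows that `a^n` either cancels, is a square `s s`, or is a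
power of a single letter. Neither of the last two can happen: if `a^n = s^m` then `s` commutes
with `a^n`, so `s = a^k` and `k m = n`, which is impossible for `m = 2` since `n` is odd, and
for a single letter `s` since `|a| > 1`.
-/

theorem length_wpow {β : Type*} (w : List β) (n : ℕ) : (wpow w n).length = n * w.length := by
  simp [wpow]

theorem prefix_wpow {β : Type*} (w : List β) {n : ℕ} (hn : n ≠ 0) : w <+: wpow w n := by
  obtain ⟨k, rfl⟩ := Nat.exists_eq_succ_of_ne_zero hn
  simp [wpow, List.replicate_succ]

namespace List

theorem eq_nil_or_eq_singleton_of_length_le_one {β : Type*} {l : List β} (h : l.length ≤ 1) :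
    l = [] ∨ ∃ x, l = [x] := by
  rcases l with _ | ⟨x, _ | _⟩ <;> simp_all

theorem forall_mem_eq_of_cons_eq_append {β : Type*} {x y : β} :
    ∀ {l : List β}, x :: l = l ++ [y] → x = y ∧ ∀ z ∈ l, z = x
  | [], h => by simpa using h
  | z :: l, h => by
    simp only [cons_append, cons.injEq] at h
    obtain ⟨rfl, h⟩ := h
    obtain ⟨rfl, hl⟩ := forall_mem_eq_of_cons_eq_append h
    simpa using hl

end List

namespace FreeGroup

variable {α : Type*}

theorem reduced_iff_isReduced {w : List (α × Bool)} : Reduced w ↔ IsReduced w := by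
  have : (fun a b : α × Bool => ¬(b.1 = a.1 ∧ b.2 = !a.2)) =
      fun a b => a.1 = b.1 → a.2 = b.2 := by
    ext ⟨x, _ | _⟩ ⟨y, _ | _⟩ <;> simp [eq_comm]
  rw [Reduced, IsReduced, ← this]
  rfl

theorem invRev_singleton (x : α × Bool) : invRev [x] = [(x.1, !x.2)] := rfl

theorem mk_ne_one_of_isReduced {w : List (α × Bool)} (h : IsReduced w) (hw : w ≠ []) :
    mk w ≠ 1 := by
  classical
  rwa [ne_eq, ← toWord_eq_nil_iff, toWord_mk, h.reduce_eq]

theorem eq_nil_of_invRev_eq_self {w : List (α × Bool)} (h : IsReduced w) (hw : invRev w = w) :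
    w = [] := by
  by_contra hne
  exact mk_ne_one_of_isReduced h hne (self_eq_inv.1 (by rw [inv_mk, hw]))

theorem eq_nil_of_isReduced_append_invRev {w r : List (α × Bool)}
    (h : IsReduced (w ++ invRev w ++ r)) : w = [] := by
  rcases w.eq_nil_or_concat with rfl | ⟨w, ⟨x, b⟩, rfl⟩
  · rfl
  · have h' : IsReduced (w ++ (x, b) :: (x, !b) :: (invRev w ++ r)) := by
      simpa [invRev_append, invRev] using h
    exact (h'.not_step .not).elim

theorem getLast?_ne_of_isReduced_append_cons {L R : List (α × Bool)} {y : α × Bool}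
    (h : IsReduced (L ++ y :: R)) : L.getLast? ≠ some (y.1, !y.2) := by
  intro hL
  have := (List.isChain_append.1 h).2.2 _ hL y rfl rfl
  simp at this

theorem mk_wpow (w : List (α × Bool)) (n : ℕ) : mk (wpow w n) = mk w ^ n := (pow_mk n).symm

theorem dvd_of_wpow_eq_wpow {a s : List (α × Bool)} {m n : ℕ} (ha : mk a ≠ 1)
    (hcen : Subgroup.centralizer {mk (wpow a n)} = Subgroup.zpowers (mk a))
    (h : wpow s m = wpow a n) : m ∣ n := by
  have hs : mk s ∈ Subgroup.centralizer {mk (wpow a n)} := by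
    rw [Subgroup.mem_centralizer_singleton_iff, ← h, mk_wpow]
    exact (Commute.self_pow (mk s) m).eq
  obtain ⟨k, hk⟩ := Subgroup.mem_zpowers_iff.1 (hcen ▸ hs)
  have hpow : mk a ^ (k * m) = mk a ^ (n : ℤ) := by
    rw [zpow_mul, hk, zpow_natCast, zpow_natCast, ← mk_wpow, ← mk_wpow, h]
  have hkm := injective_zpow_iff_not_isOfFinOrder.2 (not_isOfFinOrder_of_isMulTorsionFree ha) hpow
  exact Int.natCast_dvd_natCast.1 ⟨k, by rw [← hkm, mul_comm]⟩

theorem wpow_ne_append_self {a : List (α × Bool)} {n : ℕ} (ha : mk a ≠ 1)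
    (hcen : Subgroup.centralizer {mk (wpow a n)} = Subgroup.zpowers (mk a)) (hn : Odd n)
    (s : List (α × Bool)) : wpow a n ≠ s ++ s := by
  intro h
  have := dvd_of_wpow_eq_wpow (s := s) (m := 2) ha hcen (by rw [h]; simp [wpow])
  exact Nat.not_even_iff_odd.2 hn (even_iff_two_dvd.2 this)

theorem exists_mem_wpow_ne {a : List (α × Bool)} {n : ℕ} (ha : mk a ≠ 1)
    (hcen : Subgroup.centralizer {mk (wpow a n)} = Subgroup.zpowers (mk a))
    (hlen : 1 < a.length) (hn : n ≠ 0) (ℓ : α × Bool) : ∃ x ∈ wpow a n, x ≠ ℓ := by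
  by_contra! hℓ
  have hW : wpow [ℓ] (n * a.length) = wpow a n := by
    rw [List.eq_replicate_iff.2 ⟨length_wpow a n, hℓ⟩]
    simp [wpow]
  have := Nat.le_of_dvd (Nat.pos_of_ne_zero hn) (dvd_of_wpow_eq_wpow ha hcen hW)
  nlinarith [Nat.pos_of_ne_zero hn]

/-- The first multiset of the theorem is `sides u₀ c d`, the second `sides v₀ c⁻¹ d⁻¹`. -/
def sides (u c d : List (α × Bool)) : Multiset (List (α × Bool)) :=
  {u, invRev u, c ++ u, u ++ d, invRev (c ++ u), invRev (u ++ d)}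

theorem length_eq_of_sides_eq {u v c d : List (α × Bool)}
    (h : sides u c d = sides v (invRev c) (invRev d)) : u.length = v.length := by
  have := congrArg (fun s => (s.map List.length).sum) h
  simp only [sides, Multiset.insert_eq_cons, Multiset.map_cons, Multiset.map_singleton,
    Multiset.sum_cons, Multiset.sum_singleton, List.length_append, invRev_length] at this
  omega

theorem eq_or_eq_invRev_of_mem_sides {v c d x : List (α × Bool)} (hx : x ∈ sides v c d)
    (hlen : x.length = v.length) : x = v ∨ x = invRev v := by
  simp only [sides, Multiset.insert_eq_cons, Multiset.mem_cons, Multiset.mem_singleton] at hx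
  rcases hx with rfl | rfl | rfl | rfl | rfl | rfl <;> simp_all [invRev_append]

theorem eq_of_mem_sides_of_length_eq_add_one {v c d x : List (α × Bool)} (hx : x ∈ sides v c d)
    (hlen : x.length = v.length + 1) :
    x = c ++ v ∨ x = v ++ d ∨ x = invRev (c ++ v) ∨ x = invRev (v ++ d) := by
  simp only [sides, Multiset.insert_eq_cons, Multiset.mem_cons, Multiset.mem_singleton] at hx
  rcases hx with rfl | rfl | h <;> simp_all

theorem sides_ne_sides_of_eq {u c d : List (α × Bool)} (hu : u ≠ [])
    (hc : c.length ≤ 1) (hd : d.length ≤ 1)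
    (hW : IsReduced (u ++ d ++ invRev u ++ c)) (hWshift : IsReduced (invRev u ++ c ++ u ++ d)) :
    sides u c d ≠ sides u (invRev c) (invRev d) := by
  intro E
  obtain rfl | ⟨c₀, rfl⟩ := List.eq_nil_or_eq_singleton_of_length_le_one hc
  · refine hu (invRev_injective (eq_nil_of_isReduced_append_invRev (r := d) ?_))
    simpa [invRev_invRev] using hWshift
  obtain rfl | ⟨d₀, rfl⟩ := List.eq_nil_or_eq_singleton_of_length_le_one hd
  · exact hu (eq_nil_of_isReduced_append_invRev (by simpa using hW))
  have hx : c₀ :: u ∈ sides u (invRev [c₀]) (invRev [d₀]) := E ▸ by simp [sides]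
  rcases eq_of_mem_sides_of_length_eq_add_one hx (by simp) with h | h | h | h
  · simp [invRev_singleton, Prod.ext_iff] at h
  · rw [invRev_singleton] at h
    obtain ⟨hcd, hall⟩ := List.forall_mem_eq_of_cons_eq_append h
    obtain ⟨z, hz⟩ := Option.ne_none_iff_exists'.1 (mt List.getLast?_eq_none_iff.1 hu)
    refine getLast?_ne_of_isReduced_append_cons (R := invRev u ++ [c₀]) (by simpa using hW) ?_
    rw [hz, hall z (List.mem_of_getLast? hz), hcd]
  · obtain ⟨u, y, rfl⟩ := (List.eq_nil_or_concat' u).resolve_left hu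
    rw [invRev_append, invRev_invRev, invRev_append, invRev_singleton] at h
    simp only [List.cons_append, List.nil_append, List.cons.injEq, Prod.ext_iff,
      List.append_singleton_inj] at h
    obtain ⟨⟨-, h₁⟩, -, -, h₂⟩ := h
    simp [h₂] at h₁
  · simp only [invRev_append, invRev_singleton, Bool.not_not, List.singleton_append,
      List.cons.injEq] at h
    have hu_red : IsReduced u := hW.infix ⟨[], d₀ :: (invRev u ++ [c₀]), by simp⟩
    exact hu (eq_nil_of_invRev_eq_self hu_red h.2.symm)

theorem eq_of_append_mem_sides_of_forall_mem_eq {u : List (α × Bool)} {c₀ d₀ : α × Bool}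
    (hu : u ≠ []) (hall : ∀ z ∈ u, z = c₀)
    (h : u ++ [d₀] ∈ sides (invRev u) (invRev [c₀]) (invRev [d₀])) : d₀ = c₀ := by
  rcases eq_of_mem_sides_of_length_eq_add_one h (by simp) with h | h | h | h
  · obtain ⟨z, u', rfl⟩ := List.exists_cons_of_ne_nil hu
    simp [hall z (List.mem_cons_self ..), invRev_singleton, Prod.ext_iff] at h
  · rw [invRev_singleton, List.append_singleton_inj] at h
    simp [Prod.ext_iff] at h
  · rw [invRev_append, invRev_invRev, invRev_invRev, List.append_singleton_inj] at h
    exact h.2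
  · obtain ⟨z, u', rfl⟩ := List.exists_cons_of_ne_nil hu
    simp only [invRev_append, invRev_invRev, invRev_singleton, Bool.not_not,
      List.cons_append, List.cons.injEq] at h
    exact h.1.symm.trans (hall z (List.mem_cons_self ..))

theorem sides_ne_sides_of_eq_invRev {u c d : List (α × Bool)} (hu : u ≠ [])
    (hc : c.length ≤ 1) (hd : d.length ≤ 1) (hW : IsReduced (u ++ d ++ u ++ c))
    (hsq : ∀ s, u ++ d ++ u ++ c ≠ s ++ s) (hletter : ∀ ℓ, ∃ x ∈ u ++ d ++ u ++ c, x ≠ ℓ) :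
    sides u c d ≠ sides (invRev u) (invRev c) (invRev d) := by
  intro E
  have hcu : c ++ u ∈ sides (invRev u) (invRev c) (invRev d) := E ▸ by simp [sides]
  have hud : u ++ d ∈ sides (invRev u) (invRev c) (invRev d) := E ▸ by simp [sides]
  have hconst : ∀ ℓ, (∀ z ∈ u, z = ℓ) → (∀ z ∈ c, z = ℓ) → (∀ z ∈ d, z = ℓ) → False := by
    intro ℓ hℓu hℓc hℓd
    obtain ⟨x, hx, hne⟩ := hletter ℓ
    simp only [List.mem_append] at hx
    rcases hx with ((h | h) | h) | h
    exacts [hne (hℓu x h), hne (hℓd x h), hne (hℓu x h), hne (hℓc x h)]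
  obtain rfl | ⟨c₀, rfl⟩ := List.eq_nil_or_eq_singleton_of_length_le_one hc <;>
    obtain rfl | ⟨d₀, rfl⟩ := List.eq_nil_or_eq_singleton_of_length_le_one hd
  · exact hsq u (by simp)
  · rcases eq_of_mem_sides_of_length_eq_add_one hud (by simp) with h | h | h | h
    · simpa using congrArg List.length h
    · rw [invRev_singleton, List.append_singleton_inj] at h
      simp [Prod.ext_iff] at h
    · simpa using congrArg List.length h
    · simp only [invRev_append, invRev_invRev, invRev_singleton, Bool.not_not] at h
      exact hconst d₀ (List.forall_mem_eq_of_cons_eq_append h.symm).2 (by simp) (by simp)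
  · rcases eq_of_mem_sides_of_length_eq_add_one hcu (by simp) with h | h | h | h
    · simp [invRev_singleton, Prod.ext_iff] at h
    · simpa using congrArg List.length h
    · simp only [invRev_append, invRev_invRev, invRev_singleton, Bool.not_not] at h
      exact hconst c₀ (List.forall_mem_eq_of_cons_eq_append h).2 (by simp) (by simp)
    · simpa using congrArg List.length h
  · rcases eq_of_mem_sides_of_length_eq_add_one hcu (by simp) with h | h | h | h
    · simp [invRev_singleton, Prod.ext_iff] at h
    · obtain ⟨u', z, rfl⟩ := (List.eq_nil_or_concat' u).resolve_left hu
      rw [← List.append_assoc, invRev_singleton, List.append_singleton_inj] at h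
      exact getLast?_ne_of_isReduced_append_cons (L := u' ++ [z]) (by simpa using hW)
        (by simp [h.2])
    · simp only [invRev_append, invRev_invRev, invRev_singleton, Bool.not_not] at h
      have hall := (List.forall_mem_eq_of_cons_eq_append h).2
      have hdc := eq_of_append_mem_sides_of_forall_mem_eq hu hall hud
      exact hconst c₀ hall (by simp) (by simp [hdc])
    · simp only [invRev_append, invRev_invRev, invRev_singleton, Bool.not_not,
        List.singleton_append, List.cons.injEq] at h
      exact hsq (u ++ [c₀]) (by simp [h.1])

end FreeGroup

open FreeGroup in
theorem sides_multisets_distinct_general {α : Type*} (a u₀ v₀ c d : List (α × Bool)) (n : ℕ)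
    (hn : Odd n) (ha : 1 < a.length)
    (hcyc : CycReduced (wpow a n))
    (hdecomp : wpow a n = u₀ ++ d ++ wordInv v₀ ++ c)
    (hc : c.length ≤ 1) (hd : d.length ≤ 1)
    (hu : u₀ ≠ [])
    (hcen : Subgroup.centralizer {FreeGroup.mk (wpow a n)}
      = Subgroup.zpowers (FreeGroup.mk a)) :
    ({u₀, wordInv u₀, c ++ u₀, u₀ ++ d, wordInv (c ++ u₀), wordInv (u₀ ++ d)} :
        Multiset (List (α × Bool)))
      ≠ ({v₀, wordInv v₀, wordInv c ++ v₀, v₀ ++ wordInv d,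
          wordInv (wordInv c ++ v₀), wordInv (v₀ ++ wordInv d)} :
        Multiset (List (α × Bool))) := by
  change sides u₀ c d ≠ sides v₀ (invRev c) (invRev d)
  change wpow a n = u₀ ++ d ++ invRev v₀ ++ c at hdecomp
  intro E
  have hn₀ : n ≠ 0 := hn.pos.ne'
  have hW : IsReduced (wpow a n) :=
    reduced_iff_isReduced.1 (by simpa using hcyc [] (wpow a n) rfl)
  have ha₁ : mk a ≠ 1 := mk_ne_one_of_isReduced (hW.infix (prefix_wpow a hn₀).isInfix)
    (List.ne_nil_of_length_pos (by omega))
  have hu₀ : u₀ ∈ sides v₀ (invRev c) (invRev d) := E ▸ by simp [sides]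
  rcases eq_or_eq_invRev_of_mem_sides hu₀ (length_eq_of_sides_eq E) with rfl | h
  · refine sides_ne_sides_of_eq hu hc hd (hdecomp ▸ hW) ?_ E
    exact reduced_iff_isReduced.1
      (by simpa using hcyc (u₀ ++ d) (invRev u₀ ++ c) (by simp [hdecomp]))
  · obtain rfl : v₀ = invRev u₀ := by rw [h, invRev_invRev]
    rw [invRev_invRev] at hdecomp
    exact sides_ne_sides_of_eq_invRev hu hc hd (hdecomp ▸ hW)
      (hdecomp ▸ wpow_ne_append_self ha₁ hcen hn)
      (hdecomp ▸ exists_mem_wpow_ne ha₁ hcen ha hn₀) E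

/-- If the cyclically reduced word `a^n = u₀ d v₀⁻¹ c` with `|c|, |d| ≤ 1`,
`u₀, v₀` nonempty, `n` odd, `|a| > 1` and the centralizer of `a^n` is `⟨a⟩`,
then the two six-element multisets of words are distinct. -/
theorem sides_multisets_distinct {α : Type*} (a u₀ v₀ c d : List (α × Bool)) (n : ℕ)
    (hn : Odd n) (ha : 1 < a.length)
    (hcyc : CycReduced (wpow a n))
    (hdecomp : wpow a n = u₀ ++ d ++ wordInv v₀ ++ c)
    (hc : c.length ≤ 1) (hd : d.length ≤ 1)
    (hu : u₀ ≠ []) (hv : v₀ ≠ [])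
    (hcen : Subgroup.centralizer {FreeGroup.mk (wpow a n)}
      = Subgroup.zpowers (FreeGroup.mk a)) :
    ({u₀, wordInv u₀, c ++ u₀, u₀ ++ d, wordInv (c ++ u₀), wordInv (u₀ ++ d)} :
        Multiset (List (α × Bool)))
      ≠ ({v₀, wordInv v₀, wordInv c ++ v₀, v₀ ++ wordInv d,
          wordInv (wordInv c ++ v₀), wordInv (v₀ ++ wordInv d)} :
        Multiset (List (α × Bool))) :=
  sides_multisets_distinct_general a u₀ v₀ c d n hn ha hcyc hdecomp hc hd hu hcen
end

section
/- Let a, B, C be primitive cyclically reduced words with B = a^s a₁ and C = a^t a₂, where 4 ≤ s ≤ t ≤ s+1, a₁, a₂ are nontrivial proper prefixes of a, and B ≠ C. If D is a common prefix of B^m and C^m for some m with |B| ≤ |C|, then |D| < |C| + |a|. -/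
/-- A word is primitive if it is not a proper power. -/
def PrimitiveWord {α : Type*} (w : List α) : Prop :=
  ∀ (v : List α) (k : ℕ), w = wpow v k → k = 1

theorem wpow_add {α : Type*} (w : List α) (m n : ℕ) :
    wpow w (m + n) = wpow w m ++ wpow w n := by
  unfold wpow
  rw [List.replicate_add, List.flatten_append]

theorem wpow_succ {α : Type*} (w : List α) (n : ℕ) :
    wpow w (n + 1) = w ++ wpow w n := by
  simp [wpow, List.replicate_succ]

theorem wpow_one {α : Type*} (w : List α) : wpow w 1 = w := by
  simp [wpow]

theorem wpow_zero {α : Type*} (w : List α) : wpow w 0 = [] := rfl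

theorem wpow_prefix {α : Type*} (w : List α) {i j : ℕ} (h : i ≤ j) :
    wpow w i <+: wpow w j := by
  obtain ⟨d, rfl⟩ := Nat.le.dest h
  rw [wpow_add]; exact List.prefix_append _ _

theorem self_prefix_wpow {α : Type*} (w : List α) {k : ℕ} (h : 1 ≤ k) :
    w <+: wpow w k := by
  have := wpow_prefix w h
  rwa [wpow_one] at this

theorem prefix_drop' {α : Type*} {l₁ l₂ : List α} (n : ℕ) (h : l₁ <+: l₂) :
    l₁.drop n <+: l₂.drop n := by
  obtain ⟨t, rfl⟩ := h
  rw [List.drop_append]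
  exact List.prefix_append _ _

/-- Commuting words are powers of a common word. -/
theorem comm_words {α : Type*} : ∀ (n : ℕ) (x y : List α), x.length + y.length ≤ n →
    x ++ y = y ++ x → ∃ (w : List α) (k l : ℕ), x = wpow w k ∧ y = wpow w l := by
  intro n
  induction n with
  | zero =>
    intro x y hn _
    have hx : x = [] := List.length_eq_zero_iff.mp (by omega)
    have hy : y = [] := List.length_eq_zero_iff.mp (by omega)
    exact ⟨[], 0, 0, by simp [hx, wpow_zero], by simp [hy, wpow_zero]⟩
  | succ n ih =>
    intro x y hn h
    by_cases hx : x = []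
    · exact ⟨y, 0, 1, by simp [hx, wpow_zero], by simp [wpow_one]⟩
    by_cases hy : y = []
    · exact ⟨x, 1, 0, by simp [wpow_one], by simp [hy, wpow_zero]⟩
    rcases le_total x.length y.length with hle | hle
    · have h1 : x <+: y ++ x := by rw [← h]; exact List.prefix_append x y
      have h2 : x <+: y := List.prefix_of_prefix_length_le h1 (List.prefix_append y x) hle
      obtain ⟨z, rfl⟩ := h2
      have h3 : x ++ z = z ++ x :=
        List.append_cancel_left (show x ++ (x ++ z) = x ++ (z ++ x) by
          simpa [List.append_assoc] using h)
      have hxl : 1 ≤ x.length := List.length_pos_iff.mpr hx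
      have hlen' : x.length + z.length ≤ n := by
        simp only [List.length_append] at hn; omega
      obtain ⟨w, k, l, hxw, hzw⟩ := ih x z hlen' h3
      exact ⟨w, k, k + l, hxw, by rw [wpow_add, ← hxw, ← hzw]⟩
    · have h1 : y <+: x ++ y := by rw [h]; exact List.prefix_append y x
      have h2 : y <+: x := List.prefix_of_prefix_length_le h1 (List.prefix_append x y) hle
      obtain ⟨z, rfl⟩ := h2
      have h3 : y ++ z = z ++ y :=
        List.append_cancel_left (show y ++ (y ++ z) = y ++ (z ++ y) by
          simpa [List.append_assoc] using h.symm)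
      have hyl : 1 ≤ y.length := List.length_pos_iff.mpr hy
      have hlen' : y.length + z.length ≤ n := by
        simp only [List.length_append] at hn; omega
      obtain ⟨w, k, l, hyw, hzw⟩ := ih y z hlen' h3
      exact ⟨w, k + l, k, by rw [wpow_add, ← hyw, ← hzw], hyw⟩

/-- A primitive word is not a product of two nonempty commuting words. -/
theorem not_prim_of_comm {α : Type*} {a x y : List α} (hx : x ≠ []) (hy : y ≠ [])
    (hxy : a = x ++ y) (h : x ++ y = y ++ x) (hp : PrimitiveWord a) : False := by
  obtain ⟨w, k, l, hxw, hyw⟩ := comm_words (x.length + y.length) x y le_rfl h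
  have hk : k ≠ 0 := by rintro rfl; rw [wpow_zero] at hxw; exact hx hxw
  have hl : l ≠ 0 := by rintro rfl; rw [wpow_zero] at hyw; exact hy hyw
  have ha : a = wpow w (k + l) := by rw [hxy, wpow_add, hxw, hyw]
  have := hp w (k + l) ha
  omega

/-- A primitive word `a` has no occurrence inside `a^k` at an offset `0 < r < |a|`. -/
theorem no_internal_occ {α : Type*} {a v : List α} {k : ℕ} (hp : PrimitiveWord a)
    (h : v ++ a <+: wpow a k) (h0 : v ≠ []) (h1 : v.length < a.length) : False := by
  have hvl : 1 ≤ v.length := List.length_pos_iff.mpr h0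
  have hal : 1 ≤ a.length := by omega
  have hk : 2 ≤ k := by
    have h2 := h.length_le
    rw [wpow_length, List.length_append] at h2
    nlinarith
  have hd : a <+: (wpow a k).drop v.length := by
    have h3 := prefix_drop' v.length h
    rwa [List.drop_left] at h3
  have hwk : wpow a k = a ++ (a ++ wpow a (k - 2)) := by
    conv_lhs => rw [show k = (k - 2) + 1 + 1 by omega]
    rw [wpow_succ, wpow_succ]
  have hd2 : (wpow a k).drop v.length = a.drop v.length ++ (a ++ wpow a (k - 2)) := by
    rw [hwk, List.drop_append, Nat.sub_eq_zero_of_le (le_of_lt h1),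
      List.drop_zero]
  rw [hd2] at hd
  have hz : a.drop v.length ++ a.take v.length <+: a.drop v.length ++ (a ++ wpow a (k - 2)) :=
    (List.prefix_append_right_inj _).mpr
      ((List.take_prefix _ _).trans (List.prefix_append _ _))
  have heq : a = a.drop v.length ++ a.take v.length :=
    (List.prefix_of_prefix_length_le hd hz (by simp; omega)).eq_of_length (by simp; omega)
  refine not_prim_of_comm (x := a.drop v.length) (y := a.take v.length) ?_ ?_ heq ?_ hp
  · intro hcon
    have := congrArg List.length hcon
    simp at this; omega
  · intro hcon
    have h9 : (a.take v.length).length = 0 := by rw [hcon]; rfl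
    rw [List.length_take] at h9
    omega
  · rw [← heq, List.take_append_drop]

/-- A common prefix of `B^m` and `C^m` with `B = a^s a₁`, `C = a^t a₂`,
`4 ≤ s ≤ t ≤ s + 1`, has length `< |C| + |a|`. -/
theorem common_prefix_of_fine_periods {α : Type*} (a a₁ a₂ B C D : List α) (s t m : ℕ)
    (hB : B = wpow a s ++ a₁) (hC : C = wpow a t ++ a₂)
    (hs : 4 ≤ s) (hst : s ≤ t) (hts : t ≤ s + 1)
    (ha1 : a₁ ≠ [] ∧ a₁ <+: a ∧ a₁ ≠ a)
    (ha2 : a₂ ≠ [] ∧ a₂ <+: a ∧ a₂ ≠ a)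
    (hpa : PrimitiveWord a) (hpB : PrimitiveWord B) (hpC : PrimitiveWord C)
    (hne : B ≠ C) (hlen : B.length ≤ C.length)
    (hD1 : D <+: wpow B m) (hD2 : D <+: wpow C m) :
    D.length < C.length + a.length := by
  by_contra hcon
  push_neg at hcon
  obtain ⟨ha1ne, ha1p, ha1na⟩ := ha1
  obtain ⟨ha2ne, ha2p, ha2na⟩ := ha2
  have ha1l : 1 ≤ a₁.length := List.length_pos_iff.mpr ha1ne
  have ha2l : 1 ≤ a₂.length := List.length_pos_iff.mpr ha2ne
  have ha1lt : a₁.length < a.length :=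
    lt_of_le_of_ne ha1p.length_le (fun h => ha1na (ha1p.eq_of_length h))
  have ha2lt : a₂.length < a.length :=
    lt_of_le_of_ne ha2p.length_le (fun h => ha2na (ha2p.eq_of_length h))
  have hal : 1 ≤ a.length := by omega
  have hBlen : B.length = s * a.length + a₁.length := by
    rw [hB]; simp [wpow_length]
  have hClen : C.length = t * a.length + a₂.length := by
    rw [hC]; simp [wpow_length]
  have hta : t * a.length ≤ s * a.length + a.length := by
    have h9 : t * a.length ≤ (s + 1) * a.length := Nat.mul_le_mul hts le_rfl
    rwa [add_mul, one_mul] at h9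
  have hsa : 4 * a.length ≤ s * a.length := Nat.mul_le_mul hs le_rfl
  have hm : 2 ≤ m := by
    by_contra hm'
    push_neg at hm'
    have h1 := hD2.length_le
    rw [wpow_length] at h1
    have h2 : m * C.length ≤ 1 * C.length := Nat.mul_le_mul (by omega) le_rfl
    omega
  have hCm : wpow C m = C ++ wpow C (m - 1) := by
    conv_lhs => rw [show m = (m - 1) + 1 by omega]
    rw [wpow_succ]
  have hBm : wpow B m = B ++ wpow B (m - 1) := by
    conv_lhs => rw [show m = (m - 1) + 1 by omega]
    rw [wpow_succ]
  have haC : a <+: C := by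
    rw [hC]
    exact (self_prefix_wpow a (by omega)).trans (List.prefix_append _ _)
  have hCa : C ++ a <+: wpow C m := by
    rw [hCm]
    exact (List.prefix_append_right_inj C).mpr
      (haC.trans (self_prefix_wpow C (by omega)))
  have hCaB : C ++ a <+: wpow B m :=
    (List.prefix_of_prefix_length_le hCa hD2 (by simp; omega)).trans hD1
  have hBCa : B <+: C ++ a :=
    List.prefix_of_prefix_length_le (self_prefix_wpow B (by omega)) hCaB (by simp; omega)
  obtain ⟨Y, hY⟩ := hBCa
  have hCaB' := hCaB
  rw [← hY, hBm] at hCaB'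
  have hYpre : Y <+: wpow B (m - 1) := (List.prefix_append_right_inj B).mp hCaB'
  have haspre : wpow a s <+: wpow B (m - 1) :=
    (by rw [hB]; exact List.prefix_append _ _ : wpow a s <+: B).trans
      (self_prefix_wpow B (by omega))
  have hYlen : B.length + Y.length = C.length + a.length := by
    have := congrArg List.length hY
    simpa using this
  have hYa : Y <+: wpow a s :=
    List.prefix_of_prefix_length_le hYpre haspre (by rw [wpow_length]; omega)
  have heq0 : (wpow a s ++ a₁) ++ Y = (wpow a t ++ a₂) ++ a := by
    rw [← hB, ← hC]; exact hY
  obtain ht | ht : t = s ∨ t = s + 1 := by omega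
  · subst ht
    simp only [List.append_assoc] at heq0
    have heq2 : a₁ ++ Y = a₂ ++ a := List.append_cancel_left heq0
    have h12 : a₁.length ≤ a₂.length := by omega
    have h12p : a₁ <+: a₂ := List.prefix_of_prefix_length_le ha1p ha2p h12
    obtain ⟨v, hv⟩ := h12p
    by_cases hv0 : v = []
    · exact hne (by rw [hB, hC, ← hv, hv0, List.append_nil])
    · have hYv : Y = v ++ a :=
        List.append_cancel_left (show a₁ ++ Y = a₁ ++ (v ++ a) by
          rw [heq2, ← hv, List.append_assoc])
      rw [hYv] at hYa
      have hvlen : a₁.length + v.length = a₂.length := by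
        have := congrArg List.length hv; simpa using this
      exact no_internal_occ hpa hYa hv0 (by omega)
  · subst ht
    rw [wpow_add, wpow_one] at heq0
    simp only [List.append_assoc] at heq0
    have heq2 : a₁ ++ Y = a ++ (a₂ ++ a) := List.append_cancel_left heq0
    obtain ⟨u, hu⟩ := id ha1p
    have hu0 : u ≠ [] := fun h => ha1na (by rw [← hu, h, List.append_nil])
    have hule : a₁.length + u.length = a.length := by
      have := congrArg List.length hu; simpa using this
    have hYu : Y = u ++ (a₂ ++ a) :=
      List.append_cancel_left (show a₁ ++ Y = a₁ ++ (u ++ (a₂ ++ a)) by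
        rw [heq2, ← hu, List.append_assoc])
    rcases lt_trichotomy (u.length + a₂.length) a.length with hd | hd | hd
    · have hpre : (u ++ a₂) ++ a <+: wpow a s := by
        rw [hYu, ← List.append_assoc] at hYa; exact hYa
      exact no_internal_occ hpa hpre (by simp [hu0]) (by simp; omega)
    · have hp1 : u ++ a₂ <+: wpow a s := by
        refine (?_ : u ++ a₂ <+: Y).trans hYa
        rw [hYu, ← List.append_assoc]
        exact List.prefix_append _ _
      have hpa2 : a <+: wpow a s := self_prefix_wpow a (by omega)
      have hua : u ++ a₂ = a :=
        (List.prefix_of_prefix_length_le hp1 hpa2 (by simp; omega)).eq_of_length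
          (by simp; omega)
      have h12 : a₁ = a₂ := by
        have hl12 : a₁.length = a₂.length := by
          have := congrArg List.length hua; simp at this; omega
        exact (List.prefix_of_prefix_length_le ha1p ha2p hl12.le).eq_of_length hl12
      exact not_prim_of_comm ha1ne hu0 hu.symm (by rw [hu, h12, hua]) hpa
    · have hle : a.length ≤ (u ++ a₂).length := by simp; omega
      have hYdrop : Y.drop a.length = (u ++ a₂).drop a.length ++ a := by
        rw [hYu, ← List.append_assoc, List.drop_append,
          Nat.sub_eq_zero_of_le hle, List.drop_zero]
      have hpre : Y.drop a.length <+: wpow a (s - 1) := by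
        have h6 := prefix_drop' a.length hYa
        have h7 : (wpow a s).drop a.length = wpow a (s - 1) := by
          conv_lhs => rw [show s = 1 + (s - 1) by omega, wpow_add, wpow_one]
          rw [List.drop_left]
        rwa [h7] at h6
      rw [hYdrop] at hpre
      refine no_internal_occ hpa hpre ?_ ?_
      · intro h8
        have := congrArg List.length h8
        simp at this; omega
      · simp; omega
end
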